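/- Suppose subspaces W₁,...,W_N of ℝ^M with orthogonal projections P_n allow phase retrieval. Then there exists ε > 0 such that for every family of subspaces W′₁,...,W′_N with orthogonal projections Q_n satisfying ‖P_n − Q_n‖ < ε (operator norm) for all n, the subspaces {W′_n} also allow phase retrieval. -/

import Mathlib

/-!
Writing `P_n` for the projection onto `W_n`, polarization gives
`‖P_n x‖² - ‖P_n y‖² = ⟪P_n (x + y), x - y⟫`, so phase retrieval says exactly that the bilinear
forms `(u, v) ↦ ⟪P_n u, v⟫` have no common zero with `u ≠ 0 ≠ v`. By compactness of the unit
sphere, `∑ n |⟪P_n u, v⟫|` is then bounded below by some `c > 0` on pairs of unit vectors, and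
this survives any perturbation of the `P_n` with `∑ n ‖P_n - Q_n‖ < c`.
-/

open scoped RealInnerProductSpace

open Metric

variable {ι E : Type*} [NormedAddCommGroup E] [InnerProductSpace ℝ E]

namespace Submodule

theorem real_inner_starProjection_self (K : Submodule ℝ E) [K.HasOrthogonalProjection] (x : E) :
    ⟪K.starProjection x, x⟫ = ‖K.orthogonalProjectionOnto x‖ ^ 2 := by
  rw [← real_inner_self_eq_norm_sq, inner_orthogonalProjectionOnto_eq_of_mem_right,
    real_inner_comm, starProjection_apply]

theorem real_inner_starProjection_add_sub (K : Submodule ℝ E) [K.HasOrthogonalProjection]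
    (x y : E) :
    ⟪K.starProjection (x + y), x - y⟫ =
      ‖K.orthogonalProjectionOnto x‖ ^ 2 - ‖K.orthogonalProjectionOnto y‖ ^ 2 := by
  have hsymm : ⟪K.starProjection y, x⟫ = ⟪K.starProjection x, y⟫ := by
    rw [inner_starProjection_left_eq_right, real_inner_comm]
  rw [map_add, inner_sub_right, inner_add_left, inner_add_left, hsymm,
    real_inner_starProjection_self, real_inner_starProjection_self]
  ring

end Submodule

def IsPairSeparating (T : ι → E →L[ℝ] E) : Prop :=
  ∀ u v : E, (∀ i, ⟪T i u, v⟫ = 0) → u = 0 ∨ v = 0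

def AllowsPhaseRetrieval (W : ι → Submodule ℝ E) [∀ i, (W i).HasOrthogonalProjection] : Prop :=
  ∀ x y : E, (∀ i, ‖(W i).orthogonalProjectionOnto x‖ = ‖(W i).orthogonalProjectionOnto y‖) →
    x = y ∨ x = -y

theorem allowsPhaseRetrieval_iff_isPairSeparating (W : ι → Submodule ℝ E)
    [∀ i, (W i).HasOrthogonalProjection] :
    AllowsPhaseRetrieval W ↔ IsPairSeparating fun i ↦ (W i).starProjection := by
  have polar (x y : E) (i : ι) :
      ‖(W i).orthogonalProjectionOnto x‖ = ‖(W i).orthogonalProjectionOnto y‖ ↔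
        ⟪(W i).starProjection (x + y), x - y⟫ = 0 := by
    rw [Submodule.real_inner_starProjection_add_sub, sub_eq_zero,
      sq_eq_sq₀ (norm_nonneg _) (norm_nonneg _)]
  constructor
  · intro hW u v huv
    have hx : (u + v) + (u - v) = (2 : ℝ) • u := by module
    have hy : (u + v) - (u - v) = (2 : ℝ) • v := by module
    have key := hW (u + v) (u - v) fun i ↦ by
      rw [polar, hx, hy, map_smul, inner_smul_left, inner_smul_right, huv i, mul_zero, mul_zero]
    rcases key with h | h
    · right
      simpa [hy] using congrArg (· - (u - v)) h
    · left
      simpa [hx] using congrArg (· + (u - v)) h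
  · intro hT x y hxy
    rcases hT (x + y) (x - y) fun i ↦ (polar x y i).1 (hxy i) with h | h
    · exact Or.inr (eq_neg_of_add_eq_zero_left h)
    · exact Or.inl (sub_eq_zero.mp h)

section Stability

variable {T : ι → E →L[ℝ] E}

theorem isPairSeparating_iff_forall_sphere :
    IsPairSeparating T ↔
      ∀ u ∈ sphere (0 : E) 1, ∀ v ∈ sphere (0 : E) 1, ∃ i, ⟪T i u, v⟫ ≠ 0 := by
  constructor
  · intro hT u hu v hv
    by_contra! h
    rcases hT u v h with rfl | rfl <;> simp_all
  · intro hT u v huv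
    by_contra! h
    obtain ⟨i, hi⟩ := hT (‖u‖⁻¹ • u) (by simp [norm_smul, h.1])
      (‖v‖⁻¹ • v) (by simp [norm_smul, h.2])
    exact hi (by rw [map_smul, inner_smul_left, inner_smul_right, huv i, mul_zero, mul_zero])

variable [Fintype ι]

theorem IsPairSeparating.exists_pos_le_sum_abs_inner [FiniteDimensional ℝ E]
    (hT : IsPairSeparating T) :
    ∃ c > 0, ∀ u ∈ sphere (0 : E) 1, ∀ v ∈ sphere (0 : E) 1, c ≤ ∑ i, |⟪T i u, v⟫| := by
  have hcont : Continuous fun p : E × E ↦ ∑ i, |⟪T i p.1, p.2⟫| := by fun_prop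
  obtain ⟨c, hc, hle⟩ := ((isCompact_sphere (0 : E) 1).prod (isCompact_sphere 0 1)).exists_forall_le'
    hcont.continuousOn (a := 0) fun p ⟨hu, hv⟩ ↦ by
      obtain ⟨i, hi⟩ := isPairSeparating_iff_forall_sphere.1 hT p.1 hu p.2 hv
      exact lt_of_lt_of_le (abs_pos.2 hi)
        (Finset.single_le_sum (f := fun j ↦ |⟪T j p.1, p.2⟫|) (fun j _ ↦ abs_nonneg _)
          (Finset.mem_univ i))
  exact ⟨c, hc, fun u hu v hv ↦ hle (u, v) ⟨hu, hv⟩⟩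

theorem sum_abs_inner_le_sum_norm_sub {S : ι → E →L[ℝ] E} {u v : E} (hu : ‖u‖ = 1)
    (hv : ‖v‖ = 1) (hS : ∀ i, ⟪S i u, v⟫ = 0) :
    ∑ i, |⟪T i u, v⟫| ≤ ∑ i, ‖T i - S i‖ := by
  refine Finset.sum_le_sum fun i _ ↦ ?_
  calc |⟪T i u, v⟫| = |⟪(T i - S i) u, v⟫| := by
        rw [sub_apply, inner_sub_left, hS i, sub_zero]
    _ ≤ ‖(T i - S i) u‖ * ‖v‖ := abs_real_inner_le_norm _ _
    _ ≤ ‖T i - S i‖ * ‖u‖ * ‖v‖ := by gcongr; exact (T i - S i).le_opNorm u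
    _ = ‖T i - S i‖ := by rw [hu, hv, mul_one, mul_one]

theorem IsPairSeparating.exists_pos_forall_norm_sub_lt [FiniteDimensional ℝ E]
    (hT : IsPairSeparating T) :
    ∃ ε > 0, ∀ S : ι → E →L[ℝ] E, (∀ i, ‖T i - S i‖ < ε) → IsPairSeparating S := by
  obtain ⟨c, hc, hle⟩ := hT.exists_pos_le_sum_abs_inner
  set ε := c / (Fintype.card ι + 1)
  have hε : 0 < ε := by positivity
  refine ⟨ε, hε, fun S hS ↦ isPairSeparating_iff_forall_sphere.2 fun u hu v hv ↦ ?_⟩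
  by_contra! huv
  have hsum : ∑ i, ‖T i - S i‖ ≤ Fintype.card ι * ε := by
    simpa using Finset.sum_le_sum fun i (_ : i ∈ Finset.univ) ↦ (hS i).le
  have hεc : (Fintype.card ι + 1) * ε = c := mul_div_cancel₀ c (by positivity)
  have hbound := sum_abs_inner_le_sum_norm_sub (T := T) (mem_sphere_zero_iff_norm.1 hu)
    (mem_sphere_zero_iff_norm.1 hv) huv
  linarith [hle u hu v hv]

end Stability

/-- Phase retrieval with subspaces is stable under small perturbations (in operator norm)
of the orthogonal projections. -/
theorem stmt_10 (M N : ℕ) (W : Fin N → Submodule ℝ (EuclideanSpace ℝ (Fin M)))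
    (hPR : ∀ x y : EuclideanSpace ℝ (Fin M),
        (∀ n, ‖(W n).orthogonalProjectionOnto x‖ = ‖(W n).orthogonalProjectionOnto y‖) →
        x = y ∨ x = -y) :
    ∃ ε > (0 : ℝ), ∀ W' : Fin N → Submodule ℝ (EuclideanSpace ℝ (Fin M)),
      (∀ n, ‖(W n).subtypeL.comp ((W n).orthogonalProjectionOnto) -
              (W' n).subtypeL.comp ((W' n).orthogonalProjectionOnto)‖ < ε) →
      ∀ x y : EuclideanSpace ℝ (Fin M),
        (∀ n, ‖(W' n).orthogonalProjectionOnto x‖ = ‖(W' n).orthogonalProjectionOnto y‖) →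
        x = y ∨ x = -y := by
  obtain ⟨ε, hε, hstable⟩ :=
    ((allowsPhaseRetrieval_iff_isPairSeparating W).1 hPR).exists_pos_forall_norm_sub_lt
  exact ⟨ε, hε, fun W' hW' ↦ (allowsPhaseRetrieval_iff_isPairSeparating W').2 (hstable _ hW')⟩
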